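/- arXiv:2412.03120 — 2 statements merged into one kernel-verified Lean document; each statement's English description precedes it below -/
import Mathlib

section
/- One-step contraction of the Sinkhorn iteration for M = 2: let (û^(1), û^(2), û^(3)) be a dual-optimal triple. Then for every n ∈ ℕ: d_H(u^(n+1,1), û^(1)) ≤ λ(K^(1))·d_H(u^(n+1,2), û^(2)); d_H(u^(n+1,3), û^(3)) ≤ λ(K^(2))·d_H(u^(n+1,2), û^(2)); and d_H(u^(n+1,2), û^(2)) ≤ max(λ(K^(1)), λ(K^(2)))·max(d_H(u^(n,1), û^(1)), d_H(u^(n,3), û^(3))). -/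
open Matrix Finset Real

noncomputable section

/-- The Hilbert projective (pseudo)metric on the positive orthant:
`d_H(u,v) = log((max_i u_i/v_i) · (max_j v_j/u_j))`. -/
def dH {m : ℕ} (u v : Fin m → ℝ) : ℝ :=
  Real.log ((⨆ i, u i / v i) * (⨆ j, v j / u j))

/-- Birkhoff's ratio `γ(A) = max_{i,j,k,l} (A_{ik}A_{jl})/(A_{jk}A_{il})`. -/
def birkhoffGamma {n m : ℕ} (A : Matrix (Fin n) (Fin m) ℝ) : ℝ :=
  ⨆ p : (Fin n × Fin n) × Fin m × Fin m,
    A p.1.1 p.2.1 * A p.1.2 p.2.2 / (A p.1.2 p.2.1 * A p.1.1 p.2.2)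

/-- Birkhoff's contraction coefficient `λ(A) = (√γ(A) − 1)/(√γ(A) + 1)`. -/
def birkhoffLambda {n m : ℕ} (A : Matrix (Fin n) (Fin m) ℝ) : ℝ :=
  (Real.sqrt (birkhoffGamma A) - 1) / (Real.sqrt (birkhoffGamma A) + 1)

/-- The dual (Lagrangian) function for the sequentially composed OT problem with `M = 2`. -/
def dual2 {m1 m2 m3 : ℕ} (a : Fin m1 → ℝ) (b : Fin m3 → ℝ) (ε : ℝ)
    (C1 : Matrix (Fin m1) (Fin m2) ℝ) (C2 : Matrix (Fin m2) (Fin m3) ℝ)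
    (f1 : Fin m1 → ℝ) (f2 : Fin m2 → ℝ) (f3 : Fin m3 → ℝ) : ℝ :=
  (∑ j, f1 j * a j) + (∑ l, f3 l * b l)
    - ε * ((∑ j, ∑ k, Real.exp ((f1 j - f2 k - C1 j k) / ε))
      + ∑ k, ∑ l, Real.exp ((f2 k + f3 l - C2 k l) / ε))

/-- The matrix `diag(u) K diag(1/v)` induced by the first pair of Sinkhorn vectors. -/
def indMat1 {m1 m2 : ℕ} (u : Fin m1 → ℝ) (K : Matrix (Fin m1) (Fin m2) ℝ)
    (v : Fin m2 → ℝ) : Matrix (Fin m1) (Fin m2) ℝ :=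
  Matrix.diagonal u * K * Matrix.diagonal (fun k => (v k)⁻¹)

/-- The matrix `diag(v) K diag(w)` induced by the second pair of Sinkhorn vectors. -/
def indMat2 {m2 m3 : ℕ} (v : Fin m2 → ℝ) (K : Matrix (Fin m2) (Fin m3) ℝ)
    (w : Fin m3 → ℝ) : Matrix (Fin m2) (Fin m3) ℝ :=
  Matrix.diagonal v * K * Matrix.diagonal w

/-!
The Hilbert metric only sees coordinate ratios: dividing a fixed positive vector by two vectors,
or inverting both, preserves it, taking square roots halves it, and
`d_H(p/q, p'/q') ≤ d_H(p, p') + d_H(q, q')`. By the first-order conditions of the dual, a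
dual-optimal triple is a fixed point of the three Sinkhorn updates, so each update is such an
operation composed with multiplication by a positive matrix `A`, which contracts `d_H` by
`λ(A)` (Birkhoff–Hopf); the middle update averages two such contractions. For Birkhoff–Hopf, if
`lo • y ≤ x ≤ lo τ² • y` then `y = p + q` and `x = lo • (p + τ² • q)` with `p, q ≥ 0`; of `A`
only the bound `γ(A)` on its cross ratios enters, which reduces the estimate to two dimensions
and an inequality in one real variable.
-/

section HilbertMetric

variable {m : ℕ}

lemma dH_eq_of_div_eq {u v u' v' : Fin m → ℝ} (h : ∀ i, u i / v i = u' i / v' i) :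
    dH u v = dH u' v' := by
  have h' : ∀ i, v i / u i = v' i / u' i := fun i => by rw [← inv_div, h, inv_div]
  simp only [dH, h, h']

lemma dH_comm (u v : Fin m → ℝ) : dH u v = dH v u := by
  rw [dH, dH, mul_comm]

lemma dH_inv (u v : Fin m → ℝ) : dH (fun i => (u i)⁻¹) (fun i => (v i)⁻¹) = dH v u :=
  dH_eq_of_div_eq fun i => inv_div_inv (u i) (v i)

lemma dH_div_left {c : Fin m → ℝ} (hc : ∀ i, c i ≠ 0) (x y : Fin m → ℝ) :
    dH (fun i => c i / x i) (fun i => c i / y i) = dH y x :=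
  dH_eq_of_div_eq fun i => div_div_div_cancel_left' (x i) (y i) (hc i)

variable {u v : Fin m → ℝ}

lemma div_mul_div_le_iSup_mul_iSup (hu : ∀ i, 0 < u i) (hv : ∀ i, 0 < v i) (i j : Fin m) :
    u i / v i * (v j / u j) ≤ (⨆ k, u k / v k) * ⨆ k, v k / u k := by
  have hi := le_ciSup (Finite.bddAbove_range fun k => u k / v k) i
  exact mul_le_mul hi (le_ciSup (Finite.bddAbove_range fun k => v k / u k) j)
    (div_pos (hv j) (hu j)).le ((div_pos (hu i) (hv i)).le.trans hi)

lemma one_le_iSup_mul_iSup [NeZero m] (hu : ∀ i, 0 < u i) (hv : ∀ i, 0 < v i) :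
    1 ≤ (⨆ k, u k / v k) * ⨆ k, v k / u k := by
  calc (1 : ℝ) = u 0 / v 0 * (v 0 / u 0) := by
        rw [div_mul_div_cancel₀ (hv 0).ne', div_self (hu 0).ne']
    _ ≤ _ := div_mul_div_le_iSup_mul_iSup hu hv 0 0

lemma dH_nonneg [NeZero m] (hu : ∀ i, 0 < u i) (hv : ∀ i, 0 < v i) : 0 ≤ dH u v :=
  Real.log_nonneg (one_le_iSup_mul_iSup hu hv)

lemma dH_le_log_of_forall [NeZero m] (hu : ∀ i, 0 < u i) (hv : ∀ i, 0 < v i) {B : ℝ}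
    (h : ∀ i j, u i / v i * (v j / u j) ≤ B) : dH u v ≤ log B := by
  obtain ⟨i, hi⟩ := exists_eq_ciSup_of_finite (f := fun k => u k / v k)
  obtain ⟨j, hj⟩ := exists_eq_ciSup_of_finite (f := fun k => v k / u k)
  rw [dH, ← hi, ← hj]
  exact Real.log_le_log (mul_pos (div_pos (hu i) (hv i)) (div_pos (hv j) (hu j))) (h i j)

lemma dH_sqrt_le [NeZero m] (hu : ∀ i, 0 < u i) (hv : ∀ i, 0 < v i) :
    dH (fun i => √(u i)) (fun i => √(v i)) ≤ dH u v / 2 := by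
  refine (dH_le_log_of_forall (fun i => Real.sqrt_pos.2 (hu i)) (fun i => Real.sqrt_pos.2 (hv i))
    fun i j => ?_).trans_eq (Real.log_sqrt (zero_le_one.trans (one_le_iSup_mul_iSup hu hv)))
  rw [← Real.sqrt_div' _ (hv i).le, ← Real.sqrt_div' _ (hu j).le,
    ← Real.sqrt_mul (div_pos (hu i) (hv i)).le]
  exact Real.sqrt_le_sqrt (div_mul_div_le_iSup_mul_iSup hu hv i j)

lemma dH_div_le [NeZero m] {p q p' q' : Fin m → ℝ} (hp : ∀ i, 0 < p i) (hq : ∀ i, 0 < q i)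
    (hp' : ∀ i, 0 < p' i) (hq' : ∀ i, 0 < q' i) :
    dH (fun i => p i / q i) (fun i => p' i / q' i) ≤ dH p p' + dH q q' := by
  have hpp' := one_le_iSup_mul_iSup hp hp'
  have hq'q := one_le_iSup_mul_iSup hq' hq
  have hlog : log (((⨆ k, p k / p' k) * ⨆ k, p' k / p k) * ((⨆ k, q' k / q k) * ⨆ k, q k / q' k))
      = dH p p' + dH q q' := by
    rw [Real.log_mul (by positivity) (by positivity), dH_comm q]; rfl
  refine (dH_le_log_of_forall (fun i => div_pos (hp i) (hq i)) (fun i => div_pos (hp' i) (hq' i))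
    fun i j => ?_).trans_eq hlog
  calc p i / q i / (p' i / q' i) * (p' j / q' j / (p j / q j))
      = p i / p' i * (p' j / p j) * (q' i / q i * (q j / q' j)) := by
        simp only [div_eq_mul_inv, mul_inv, inv_inv]; ring
    _ ≤ _ := mul_le_mul (div_mul_div_le_iSup_mul_iSup hp hp' i j)
        (div_mul_div_le_iSup_mul_iSup hq' hq i j)
        (mul_pos (div_pos (hq' i) (hq i)) (div_pos (hq j) (hq' j))).le (by positivity)

end HilbertMetric

lemma log_one_add_mul_div_add_le {c τ : ℝ} (hc : 1 ≤ c) (hτ : 1 ≤ τ) :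
    log ((1 + c * τ) / (c + τ)) ≤ (c - 1) / (c + 1) * log τ := by
  set g : ℝ → ℝ := fun t => (c - 1) / (c + 1) * log t - log (1 + c * t) + log (c + t)
    with hg
  have hderiv : ∀ t, 0 < t →
      HasDerivAt g ((c - 1) / (c + 1) * t⁻¹ - c / (1 + c * t) + 1 / (c + t)) t := by
    intro t ht
    have h₁ : HasDerivAt (fun t => 1 + c * t) c t := by
      simpa using ((hasDerivAt_id t).const_mul c).const_add 1
    have h₂ : HasDerivAt (fun t => c + t) 1 t := (hasDerivAt_id t).const_add c
    exact (((Real.hasDerivAt_log ht.ne').const_mul ((c - 1) / (c + 1))).fun_sub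
      (h₁.log (by positivity))).fun_add (h₂.log (by positivity))
  have hderiv_nonneg : ∀ t, 0 < t →
      0 ≤ (c - 1) / (c + 1) * t⁻¹ - c / (1 + c * t) + 1 / (c + t) := by
    intro t ht
    have e : (c - 1) / (c + 1) * t⁻¹ - c / (1 + c * t) + 1 / (c + t)
        = c * (c - 1) * (t - 1) ^ 2 / ((c + 1) * t * ((1 + c * t) * (c + t))) := by
      field_simp
      ring
    rw [e]
    have : 0 ≤ c - 1 := by linarith
    positivity
  have hmono : MonotoneOn g (Set.Ici 1) := by
    refine monotoneOn_of_deriv_nonneg (convex_Ici 1) (fun t ht => ?_) (fun t ht => ?_)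
      (fun t ht => ?_)
    · exact (hderiv t (zero_lt_one.trans_le ht)).continuousAt.continuousWithinAt
    · rw [interior_Ici] at ht
      exact (hderiv t (zero_lt_one.trans ht)).differentiableAt.differentiableWithinAt
    · rw [interior_Ici] at ht
      exact (hderiv t (zero_lt_one.trans ht)).deriv ▸ hderiv_nonneg t (zero_lt_one.trans ht)
  have hg₁ : g 1 = 0 := by simp [hg, add_comm]
  have := hg₁ ▸ hmono Set.self_mem_Ici hτ hτ
  rw [Real.log_div (by positivity) (by positivity)]
  linarith

lemma exists_nonneg_add_eq_and_mul_add_mul_eq {lo hi x y : ℝ} (hlohi : lo ≤ hi) (hy : 0 ≤ y)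
    (hlo : lo * y ≤ x) (hhi : x ≤ hi * y) :
    ∃ p q : ℝ, 0 ≤ p ∧ 0 ≤ q ∧ p + q = y ∧ lo * p + hi * q = x := by
  rcases hlohi.eq_or_lt with rfl | hlt
  · exact ⟨y, 0, hy, le_rfl, add_zero y, by linarith⟩
  · have hd : 0 < hi - lo := sub_pos.2 hlt
    exact ⟨(hi * y - x) / (hi - lo), (x - lo * y) / (hi - lo),
      div_nonneg (by linarith) hd.le, div_nonneg (by linarith) hd.le,
      by field_simp; ring, by field_simp; ring⟩

-- `Pᵢ + τ² Qᵢ` and `Pᵢ + Qᵢ` are coordinates of `A (p + τ² q)` and `A (p + q)`, where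
-- `P = A p`, `Q = A q`; `hcross` is the cross-ratio bound of `A` with `γ(A) = c²`.
lemma birkhoff_two_dim {τ c P₁ Q₁ P₂ Q₂ : ℝ} (hτ : 1 ≤ τ) (hc : 1 ≤ c)
    (hP₁ : 0 ≤ P₁) (hQ₁ : 0 ≤ Q₁) (hP₂ : 0 ≤ P₂) (hQ₂ : 0 ≤ Q₂)
    (hcross : Q₁ * P₂ ≤ c ^ 2 * (Q₂ * P₁)) :
    (P₁ + τ ^ 2 * Q₁) * (P₂ + Q₂) * (c + τ) ^ 2
      ≤ (1 + c * τ) ^ 2 * ((P₁ + Q₁) * (P₂ + τ ^ 2 * Q₂)) := by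
  have h₁ : (P₁ + τ ^ 2 * Q₁) * (P₂ + c ^ 2 * Q₂) ≤ (P₂ + τ ^ 2 * c ^ 2 * Q₂) * (P₁ + Q₁) := by
    nlinarith [mul_nonneg (by nlinarith : (0:ℝ) ≤ τ ^ 2 - 1) (sub_nonneg.2 hcross)]
  have h₂ : (P₂ + τ ^ 2 * c ^ 2 * Q₂) * ((P₂ + Q₂) * (c + τ) ^ 2)
      ≤ (1 + c * τ) ^ 2 * ((P₂ + c ^ 2 * Q₂) * (P₂ + τ ^ 2 * Q₂)) := by
    nlinarith [mul_nonneg (mul_nonneg (by nlinarith : (0:ℝ) ≤ c ^ 2 - 1)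
      (by nlinarith : (0:ℝ) ≤ τ ^ 2 - 1)) (sq_nonneg (c * τ * Q₂ - P₂))]
  have hQ₂c : Q₂ ≤ c ^ 2 * Q₂ := le_mul_of_one_le_left hQ₂ (one_le_pow₀ hc)
  rcases (by positivity : (0:ℝ) ≤ P₂ + c ^ 2 * Q₂).eq_or_lt with h₀ | hpos
  · rw [show P₂ + Q₂ = 0 by linarith, mul_zero, zero_mul]
    exact mul_nonneg (sq_nonneg _) (mul_nonneg (by linarith) (by nlinarith))
  · refine le_of_mul_le_mul_left ?_ hpos
    calc (P₂ + c ^ 2 * Q₂) * ((P₁ + τ ^ 2 * Q₁) * (P₂ + Q₂) * (c + τ) ^ 2)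
        = (P₁ + τ ^ 2 * Q₁) * (P₂ + c ^ 2 * Q₂) * ((P₂ + Q₂) * (c + τ) ^ 2) := by ring
      _ ≤ (P₂ + τ ^ 2 * c ^ 2 * Q₂) * (P₁ + Q₁) * ((P₂ + Q₂) * (c + τ) ^ 2) := by gcongr
      _ = (P₁ + Q₁) * ((P₂ + τ ^ 2 * c ^ 2 * Q₂) * ((P₂ + Q₂) * (c + τ) ^ 2)) := by ring
      _ ≤ (P₁ + Q₁) * ((1 + c * τ) ^ 2 * ((P₂ + c ^ 2 * Q₂) * (P₂ + τ ^ 2 * Q₂))) := by gcongr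
      _ = _ := by ring

section Birkhoff

variable {n m : ℕ}

lemma mulVec_pos_of_pos [NeZero m] {A : Matrix (Fin n) (Fin m) ℝ} (hA : ∀ i k, 0 < A i k)
    {x : Fin m → ℝ} (hx : ∀ k, 0 < x k) (i : Fin n) : 0 < (A *ᵥ x) i :=
  Finset.sum_pos (fun k _ => mul_pos (hA i k) (hx k)) Finset.univ_nonempty

lemma birkhoffGamma_transpose (A : Matrix (Fin n) (Fin m) ℝ) :
    birkhoffGamma Aᵀ = birkhoffGamma A := by
  rw [birkhoffGamma, birkhoffGamma, ← (Equiv.prodComm _ _).iSup_comp]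
  simp [mul_comm]

lemma birkhoffLambda_transpose (A : Matrix (Fin n) (Fin m) ℝ) :
    birkhoffLambda Aᵀ = birkhoffLambda A := by
  rw [birkhoffLambda, birkhoffLambda, birkhoffGamma_transpose]

variable {A : Matrix (Fin n) (Fin m) ℝ}

lemma mul_le_birkhoffGamma_mul (hA : ∀ i k, 0 < A i k) (i j : Fin n) (k l : Fin m) :
    A i k * A j l ≤ birkhoffGamma A * (A j k * A i l) := by
  rw [← div_le_iff₀ (mul_pos (hA j k) (hA i l)), birkhoffGamma]
  exact le_ciSup (Finite.bddAbove_range fun p : (Fin n × Fin n) × Fin m × Fin m =>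
    A p.1.1 p.2.1 * A p.1.2 p.2.2 / (A p.1.2 p.2.1 * A p.1.1 p.2.2)) ((i, j), (k, l))

lemma one_le_sqrt_birkhoffGamma [NeZero n] [NeZero m] (hA : ∀ i k, 0 < A i k) :
    1 ≤ √(birkhoffGamma A) :=
  Real.one_le_sqrt.2 <| (le_mul_iff_one_le_left (mul_pos (hA 0 0) (hA 0 0))).1 <|
    mul_le_birkhoffGamma_mul hA 0 0 0 0

lemma birkhoffLambda_nonneg [NeZero n] [NeZero m] (hA : ∀ i k, 0 < A i k) :
    0 ≤ birkhoffLambda A :=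
  div_nonneg (sub_nonneg.2 (one_le_sqrt_birkhoffGamma hA)) (by positivity)

lemma mulVec_mul_mulVec_le_birkhoffGamma_mul (hA : ∀ i k, 0 < A i k) {p q : Fin m → ℝ}
    (hp : ∀ k, 0 ≤ p k) (hq : ∀ k, 0 ≤ q k) (i j : Fin n) :
    (A *ᵥ q) i * (A *ᵥ p) j ≤ birkhoffGamma A * ((A *ᵥ q) j * (A *ᵥ p) i) := by
  simp only [mulVec, dotProduct]
  rw [Finset.sum_mul_sum, Finset.sum_mul_sum, Finset.mul_sum]
  refine Finset.sum_le_sum fun k _ => ?_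
  rw [Finset.mul_sum]
  refine Finset.sum_le_sum fun l _ => ?_
  calc A i k * q k * (A j l * p l) = A i k * A j l * (q k * p l) := by ring
    _ ≤ birkhoffGamma A * (A j k * A i l) * (q k * p l) :=
        mul_le_mul_of_nonneg_right (mul_le_birkhoffGamma_mul hA i j k l)
          (mul_nonneg (hq k) (hp l))
    _ = _ := by ring

lemma mulVec_div_mul_div_le [NeZero n] [NeZero m] (hA : ∀ i k, 0 < A i k) {x y : Fin m → ℝ}
    (hy : ∀ k, 0 < y k) {lo τ : ℝ} (hlo : 0 < lo) (hτ : 1 ≤ τ)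
    (hxlo : ∀ k, lo * y k ≤ x k) (hxhi : ∀ k, x k ≤ lo * τ ^ 2 * y k) (i j : Fin n) :
    (A *ᵥ x) i / (A *ᵥ y) i * ((A *ᵥ y) j / (A *ᵥ x) j)
      ≤ ((1 + √(birkhoffGamma A) * τ) / (√(birkhoffGamma A) + τ)) ^ 2 := by
  choose p q hp hq hpq hpqx using fun k =>
    exists_nonneg_add_eq_and_mul_add_mul_eq (le_mul_of_one_le_right hlo.le (one_le_pow₀ hτ))
      (hy k).le (hxlo k) (hxhi k)
  have hAy : ∀ i, (A *ᵥ y) i = (A *ᵥ p) i + (A *ᵥ q) i := fun i => by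
    simp only [← hpq, mulVec, dotProduct, mul_add, Finset.sum_add_distrib]
  have hAx : ∀ i, (A *ᵥ x) i = lo * ((A *ᵥ p) i + τ ^ 2 * (A *ᵥ q) i) := fun i => by
    simp only [← hpqx, mulVec, dotProduct, mul_add, Finset.sum_add_distrib, Finset.mul_sum]
    congr 1 <;> refine Finset.sum_congr rfl fun k _ => by ring
  have hc := one_le_sqrt_birkhoffGamma hA
  have hcross := mulVec_mul_mulVec_le_birkhoffGamma_mul hA hp hq i j
  rw [← Real.sq_sqrt (zero_le_one.trans (Real.one_le_sqrt.1 hc))] at hcross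
  have hAp : ∀ i, 0 ≤ (A *ᵥ p) i := fun i =>
    Finset.sum_nonneg (s := Finset.univ) fun k _ => mul_nonneg (hA i k).le (hp k)
  have hAq : ∀ i, 0 ≤ (A *ᵥ q) i := fun i =>
    Finset.sum_nonneg (s := Finset.univ) fun k _ => mul_nonneg (hA i k).le (hq k)
  have key := birkhoff_two_dim hτ hc (hAp i) (hAq i) (hAp j) (hAq j) hcross
  have hx : ∀ k, 0 < x k := fun k => (mul_pos hlo (hy k)).trans_le (hxlo k)
  rw [div_mul_div_comm, div_pow, div_le_div_iff₀
    (mul_pos (mulVec_pos_of_pos hA hy i) (mulVec_pos_of_pos hA hx j))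
    (pow_pos (by linarith) 2), hAx i, hAx j, hAy i, hAy j]
  linarith [mul_le_mul_of_nonneg_left key hlo.le]

theorem dH_mulVec_le [NeZero n] [NeZero m] (hA : ∀ i k, 0 < A i k) {x y : Fin m → ℝ}
    (hx : ∀ k, 0 < x k) (hy : ∀ k, 0 < y k) :
    dH (A *ᵥ x) (A *ᵥ y) ≤ birkhoffLambda A * dH x y := by
  obtain ⟨M, hM⟩ : ∃ M, M = ⨆ k, x k / y k := ⟨_, rfl⟩
  obtain ⟨N, hN⟩ : ∃ N, N = ⨆ k, y k / x k := ⟨_, rfl⟩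
  have hdH : dH x y = log (M * N) := by rw [dH, hM, hN]
  have hMN : 1 ≤ M * N := hM ▸ hN ▸ one_le_iSup_mul_iSup hx hy
  have hN0 : 0 < N := hN ▸ (div_pos (hy 0) (hx 0)).trans_le
    (le_ciSup (Finite.bddAbove_range fun k => y k / x k) 0)
  have hτ : 1 ≤ √(M * N) := Real.one_le_sqrt.2 hMN
  have hxlo : ∀ k, N⁻¹ * y k ≤ x k := fun k => by
    rw [inv_mul_le_iff₀ hN0, ← div_le_iff₀ (hx k), hN]
    exact le_ciSup (Finite.bddAbove_range fun k => y k / x k) k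
  have hxhi : ∀ k, x k ≤ N⁻¹ * √(M * N) ^ 2 * y k := fun k => by
    rw [Real.sq_sqrt (by linarith), mul_comm M, inv_mul_cancel_left₀ hN0.ne', ← div_le_iff₀ (hy k),
      hM]
    exact le_ciSup (Finite.bddAbove_range fun k => x k / y k) k
  have hc := one_le_sqrt_birkhoffGamma hA
  set c := √(birkhoffGamma A) with hc_def
  calc dH (A *ᵥ x) (A *ᵥ y) ≤ log (((1 + c * √(M * N)) / (c + √(M * N))) ^ 2) :=
        dH_le_log_of_forall (mulVec_pos_of_pos hA hx) (mulVec_pos_of_pos hA hy)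
          (mulVec_div_mul_div_le hA hy (inv_pos.2 hN0) hτ hxlo hxhi)
    _ = 2 * log ((1 + c * √(M * N)) / (c + √(M * N))) := by rw [Real.log_pow]; norm_num
    _ ≤ 2 * ((c - 1) / (c + 1) * log √(M * N)) := by
        gcongr; exact log_one_add_mul_div_add_le hc hτ
    _ = birkhoffLambda A * dH x y := by
        rw [birkhoffLambda, ← hc_def, hdH, Real.log_sqrt (by linarith)]; ring

end Birkhoff

lemma sum_exp_single_mul {ι : Type*} [Fintype ι] [DecidableEq ι] (i : ι) (s : ℝ) (F : ι → ℝ) :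
    ∑ j, exp ((Pi.single i s : ι → ℝ) j) * F j = ∑ j, F j + (exp s - 1) * F i := by
  have h : ∀ j, exp ((Pi.single i s : ι → ℝ) j) * F j
      = F j + (Pi.single i ((exp s - 1) * F i) : ι → ℝ) j := by
    intro j
    rcases eq_or_ne j i with rfl | hj
    · simp only [Pi.single_eq_same]; ring
    · simp [hj]
  simp only [h, Finset.sum_add_distrib, Finset.sum_pi_single', Finset.mem_univ, if_true]

-- `s = 0` is a minimum, so the derivative `A - B - c` vanishes there.
lemma sub_eq_of_forall_add_le {A B c : ℝ} (h : ∀ s, A + B ≤ A * exp s + B * exp (-s) - c * s) :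
    A - B = c := by
  have hmin : IsLocalMin (fun s => A * exp s + B * exp (-s) - c * s) 0 :=
    IsMinOn.isLocalMin (fun s _ => by simpa using h s) Filter.univ_mem
  have hderiv := (((hasDerivAt_exp 0).const_mul A).fun_add
    (((hasDerivAt_neg 0).exp).const_mul B)).fun_sub ((hasDerivAt_id' 0).const_mul c)
  simp only [exp_zero, neg_zero, mul_one, mul_neg] at hderiv
  linarith [hmin.hasDerivAt_eq_zero hderiv]

section DualOptimality

variable {m1 m2 m3 : ℕ} (a : Fin m1 → ℝ) (b : Fin m3 → ℝ) {ε : ℝ}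
  (C1 : Matrix (Fin m1) (Fin m2) ℝ) (C2 : Matrix (Fin m2) (Fin m3) ℝ)
  (f1 : Fin m1 → ℝ) (f2 : Fin m2 → ℝ) (f3 : Fin m3 → ℝ)

lemma dual2_add_smul_single_left (hε : ε ≠ 0) (j : Fin m1) (s : ℝ) :
    dual2 a b ε C1 C2 (f1 + ε • Pi.single j s : Fin m1 → ℝ) f2 f3 = dual2 a b ε C1 C2 f1 f2 f3
      + ε * (s * a j - (exp s - 1) * ∑ k, exp ((f1 j - f2 k - C1 j k) / ε)) := by
  have hexp : ∀ j' k, exp (((f1 + ε • Pi.single j s : Fin m1 → ℝ) j' - f2 k - C1 j' k) / ε)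
      = exp ((Pi.single j s : Fin m1 → ℝ) j') * exp ((f1 j' - f2 k - C1 j' k) / ε) := fun j' k => by
    rw [← exp_add]; congr 1
    simp only [Pi.add_apply, Pi.smul_apply, smul_eq_mul]; field_simp; ring
  have hlin : ∑ j', (f1 + ε • Pi.single j s : Fin m1 → ℝ) j' * a j'
      = ∑ j', f1 j' * a j' + ε * (s * a j) := by
    simp only [Pi.add_apply, Pi.smul_apply, smul_eq_mul, add_mul, Finset.sum_add_distrib]
    rw [add_right_inj, Fintype.sum_eq_single j fun j' hj' => by simp [hj']]
    simp only [Pi.single_eq_same]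
    ring
  simp only [dual2, hexp, ← Finset.mul_sum, sum_exp_single_mul, hlin]
  ring

lemma dual2_add_smul_single_right (hε : ε ≠ 0) (l : Fin m3) (s : ℝ) :
    dual2 a b ε C1 C2 f1 f2 (f3 + ε • Pi.single l s : Fin m3 → ℝ) = dual2 a b ε C1 C2 f1 f2 f3
      + ε * (s * b l - (exp s - 1) * ∑ k, exp ((f2 k + f3 l - C2 k l) / ε)) := by
  have hexp : ∀ k l', exp ((f2 k + (f3 + ε • Pi.single l s : Fin m3 → ℝ) l' - C2 k l') / ε)
      = exp ((Pi.single l s : Fin m3 → ℝ) l') * exp ((f2 k + f3 l' - C2 k l') / ε) := fun k l' => by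
    rw [← exp_add]; congr 1
    simp only [Pi.add_apply, Pi.smul_apply, smul_eq_mul]; field_simp; ring
  have hlin : ∑ l', (f3 + ε • Pi.single l s : Fin m3 → ℝ) l' * b l'
      = ∑ l', f3 l' * b l' + ε * (s * b l) := by
    simp only [Pi.add_apply, Pi.smul_apply, smul_eq_mul, add_mul, Finset.sum_add_distrib]
    rw [add_right_inj, Fintype.sum_eq_single l fun l' hl' => by simp [hl']]
    simp only [Pi.single_eq_same]
    ring
  simp only [dual2, hexp, sum_exp_single_mul, Finset.sum_add_distrib, ← Finset.mul_sum, hlin]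
  ring

lemma dual2_add_smul_single_mid (hε : ε ≠ 0) (k : Fin m2) (s : ℝ) :
    dual2 a b ε C1 C2 f1 (f2 + ε • Pi.single k s : Fin m2 → ℝ) f3 = dual2 a b ε C1 C2 f1 f2 f3
      - ε * ((exp (-s) - 1) * ∑ j, exp ((f1 j - f2 k - C1 j k) / ε)
        + (exp s - 1) * ∑ l, exp ((f2 k + f3 l - C2 k l) / ε)) := by
  have hexp₁ : ∀ j k', exp ((f1 j - (f2 + ε • Pi.single k s : Fin m2 → ℝ) k' - C1 j k') / ε)
      = exp ((Pi.single k (-s) : Fin m2 → ℝ) k') * exp ((f1 j - f2 k' - C1 j k') / ε) := by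
    intro j k'
    rw [← exp_add]; congr 1
    simp only [Pi.add_apply, Pi.smul_apply, smul_eq_mul, Pi.single_neg, Pi.neg_apply]
    field_simp; ring
  have hexp₂ : ∀ k' l, exp (((f2 + ε • Pi.single k s : Fin m2 → ℝ) k' + f3 l - C2 k' l) / ε)
      = exp ((Pi.single k s : Fin m2 → ℝ) k') * exp ((f2 k' + f3 l - C2 k' l) / ε) := fun k' l => by
    rw [← exp_add]; congr 1
    simp only [Pi.add_apply, Pi.smul_apply, smul_eq_mul]; field_simp; ring
  simp only [dual2, hexp₁, hexp₂, sum_exp_single_mul, Finset.sum_add_distrib, ← Finset.mul_sum]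
  ring

variable {a b C1 C2 f1 f2 f3}

lemma sum_exp_eq_of_isMax_left (hε : 0 < ε)
    (hmax : ∀ g, dual2 a b ε C1 C2 g f2 f3 ≤ dual2 a b ε C1 C2 f1 f2 f3) (j : Fin m1) :
    ∑ k, exp ((f1 j - f2 k - C1 j k) / ε) = a j := by
  set S := ∑ k, exp ((f1 j - f2 k - C1 j k) / ε)
  refine sub_zero S ▸ sub_eq_of_forall_add_le (B := 0) fun s => ?_
  have h := hmax (f1 + ε • Pi.single j s)
  rw [dual2_add_smul_single_left a b C1 C2 f1 f2 f3 hε.ne'] at h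
  have : s * a j - (exp s - 1) * S ≤ 0 := nonpos_of_mul_nonpos_right (by linarith) hε
  linarith

lemma sum_exp_eq_of_isMax_right (hε : 0 < ε)
    (hmax : ∀ g, dual2 a b ε C1 C2 f1 f2 g ≤ dual2 a b ε C1 C2 f1 f2 f3) (l : Fin m3) :
    ∑ k, exp ((f2 k + f3 l - C2 k l) / ε) = b l := by
  set S := ∑ k, exp ((f2 k + f3 l - C2 k l) / ε)
  refine sub_zero S ▸ sub_eq_of_forall_add_le (B := 0) fun s => ?_
  have h := hmax (f3 + ε • Pi.single l s)
  rw [dual2_add_smul_single_right a b C1 C2 f1 f2 f3 hε.ne'] at h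
  have : s * b l - (exp s - 1) * S ≤ 0 := nonpos_of_mul_nonpos_right (by linarith) hε
  linarith

lemma sum_exp_eq_of_isMax_mid (hε : 0 < ε)
    (hmax : ∀ g, dual2 a b ε C1 C2 f1 g f3 ≤ dual2 a b ε C1 C2 f1 f2 f3) (k : Fin m2) :
    ∑ l, exp ((f2 k + f3 l - C2 k l) / ε) = ∑ j, exp ((f1 j - f2 k - C1 j k) / ε) := by
  set S₁ := ∑ j, exp ((f1 j - f2 k - C1 j k) / ε)
  set S₂ := ∑ l, exp ((f2 k + f3 l - C2 k l) / ε)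
  refine sub_eq_zero.1 (sub_eq_of_forall_add_le (c := 0) fun s => ?_)
  have h := hmax (f2 + ε • Pi.single k s)
  rw [dual2_add_smul_single_mid a b C1 C2 f1 f2 f3 hε.ne'] at h
  have : 0 ≤ (exp (-s) - 1) * S₁ + (exp s - 1) * S₂ :=
    nonneg_of_mul_nonneg_right (by linarith) hε
  linarith

end DualOptimality

lemma exp_mul_log_sub_mul_log_sub_div {ε x y : ℝ} (hε : ε ≠ 0) (hx : 0 < x) (hy : 0 < y)
    (C : ℝ) : exp ((ε * log x - ε * log y - C) / ε) = x * (exp (-C / ε) * y⁻¹) := by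
  rw [show (ε * log x - ε * log y - C) / ε = log x + -C / ε - log y by field_simp; ring,
    exp_sub, exp_add, exp_log hx, exp_log hy]
  ring

lemma exp_mul_log_add_mul_log_sub_div {ε x y : ℝ} (hε : ε ≠ 0) (hx : 0 < x) (hy : 0 < y)
    (C : ℝ) : exp ((ε * log x + ε * log y - C) / ε) = x * (exp (-C / ε) * y) := by
  rw [show (ε * log x + ε * log y - C) / ε = log x + (-C / ε + log y) by field_simp; ring,
    exp_add, exp_add, exp_log hx, exp_log hy]

theorem sinkhorn_fixedPoint_of_isMax_dual2 {m1 m2 m3 : ℕ} [NeZero m3] {a : Fin m1 → ℝ}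
    {b : Fin m3 → ℝ} {ε : ℝ} {C1 : Matrix (Fin m1) (Fin m2) ℝ} {C2 : Matrix (Fin m2) (Fin m3) ℝ}
    {K1 : Matrix (Fin m1) (Fin m2) ℝ} {K2 : Matrix (Fin m2) (Fin m3) ℝ}
    {u1 : Fin m1 → ℝ} {u2 : Fin m2 → ℝ} {u3 : Fin m3 → ℝ}
    (ha : ∀ j, 0 < a j) (hb : ∀ l, 0 < b l) (hε : 0 < ε)
    (hK1 : ∀ j k, K1 j k = exp (-C1 j k / ε)) (hK2 : ∀ k l, K2 k l = exp (-C2 k l / ε))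
    (hu1 : ∀ j, 0 < u1 j) (hu2 : ∀ k, 0 < u2 k) (hu3 : ∀ l, 0 < u3 l)
    (hmax : ∀ f1 f2 f3, dual2 a b ε C1 C2 f1 f2 f3 ≤ dual2 a b ε C1 C2
      (fun j => ε * log (u1 j)) (fun k => ε * log (u2 k)) (fun l => ε * log (u3 l))) :
    u1 = (fun j => a j / (K1 *ᵥ fun k => (u2 k)⁻¹) j) ∧ u3 = (fun l => b l / (K2ᵀ *ᵥ u2) l) ∧
      u2 = fun k => √((K1ᵀ *ᵥ u1) k / (K2 *ᵥ u3) k) := by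
  have hexp₁ : ∀ j k, exp ((ε * log (u1 j) - ε * log (u2 k) - C1 j k) / ε)
      = u1 j * (K1 j k * (u2 k)⁻¹) := fun j k => by
    rw [exp_mul_log_sub_mul_log_sub_div hε.ne' (hu1 j) (hu2 k), hK1]
  have hexp₂ : ∀ k l, exp ((ε * log (u2 k) + ε * log (u3 l) - C2 k l) / ε)
      = u2 k * (K2 k l * u3 l) := fun k l => by
    rw [exp_mul_log_add_mul_log_sub_div hε.ne' (hu2 k) (hu3 l), hK2]
  have h₁ : ∀ j, u1 j * (K1 *ᵥ fun k => (u2 k)⁻¹) j = a j := fun j => by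
    rw [← sum_exp_eq_of_isMax_left hε (fun g => hmax g _ _) j]
    simp only [mulVec, dotProduct, Finset.mul_sum, hexp₁]
  have h₃ : ∀ l, u3 l * (K2ᵀ *ᵥ u2) l = b l := fun l => by
    rw [← sum_exp_eq_of_isMax_right hε (fun g => hmax _ _ g) l]
    simp only [mulVec, dotProduct, transpose_apply, Finset.mul_sum, hexp₂]
    exact Finset.sum_congr rfl fun k _ => by ring
  have h₂ : ∀ k, (K1ᵀ *ᵥ u1) k * (u2 k)⁻¹ = u2 k * (K2 *ᵥ u3) k := fun k => by
    have := sum_exp_eq_of_isMax_mid hε (fun g => hmax _ g _) k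
    simp only [hexp₁, hexp₂] at this
    simp only [mulVec, dotProduct, transpose_apply, Finset.mul_sum, Finset.sum_mul, this]
    exact Finset.sum_congr rfl fun j _ => by ring
  refine ⟨funext fun j => eq_div_of_mul_eq (right_ne_zero_of_mul ((h₁ j).symm ▸ (ha j).ne')) (h₁ j),
    funext fun l => eq_div_of_mul_eq (right_ne_zero_of_mul ((h₃ l).symm ▸ (hb l).ne')) (h₃ l),
    funext fun k => ?_⟩
  have hQ := mulVec_pos_of_pos (fun k l => hK2 k l ▸ exp_pos _) hu3 k
  have hP : (K1ᵀ *ᵥ u1) k = u2 k ^ 2 * (K2 *ᵥ u3) k := by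
    have := h₂ k
    rw [← div_eq_mul_inv, div_eq_iff (hu2 k).ne'] at this
    linear_combination this
  rw [hP, mul_div_cancel_right₀ _ hQ.ne', Real.sqrt_sq (hu2 k).le]

lemma mul_add_mul_div_two_le_max_mul_max {a b x y : ℝ} (ha : 0 ≤ a) (hx : 0 ≤ x) (hy : 0 ≤ y) :
    (a * x + b * y) / 2 ≤ max a b * max x y := by
  have hab : 0 ≤ max a b := ha.trans (le_max_left a b)
  have h₁ := mul_le_mul (le_max_left a b) (le_max_left x y) hx hab
  have h₂ := mul_le_mul (le_max_right a b) (le_max_right x y) hy hab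
  linarith

section SinkhornUpdates

variable {m1 m2 m3 : ℕ} {K1 : Matrix (Fin m1) (Fin m2) ℝ} {K2 : Matrix (Fin m2) (Fin m3) ℝ}

lemma dH_div_mulVec_inv_le [NeZero m1] [NeZero m2] (hK1 : ∀ j k, 0 < K1 j k)
    {c : Fin m1 → ℝ} (hc : ∀ j, c j ≠ 0) {v w : Fin m2 → ℝ} (hv : ∀ k, 0 < v k)
    (hw : ∀ k, 0 < w k) :
    dH (fun j => c j / (K1 *ᵥ fun k => (v k)⁻¹) j) (fun j => c j / (K1 *ᵥ fun k => (w k)⁻¹) j)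
      ≤ birkhoffLambda K1 * dH v w := by
  rw [dH_div_left hc, ← dH_inv w v]
  exact dH_mulVec_le hK1 (fun k => inv_pos.2 (hw k)) (fun k => inv_pos.2 (hv k))

lemma dH_div_transpose_mulVec_le [NeZero m2] [NeZero m3] (hK2 : ∀ k l, 0 < K2 k l)
    {c : Fin m3 → ℝ} (hc : ∀ l, c l ≠ 0) {v w : Fin m2 → ℝ} (hv : ∀ k, 0 < v k)
    (hw : ∀ k, 0 < w k) :
    dH (fun l => c l / (K2ᵀ *ᵥ v) l) (fun l => c l / (K2ᵀ *ᵥ w) l)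
      ≤ birkhoffLambda K2 * dH v w := by
  rw [dH_div_left hc, dH_comm v, ← birkhoffLambda_transpose K2]
  exact dH_mulVec_le (fun l k => hK2 k l) hw hv

lemma dH_sqrt_div_mulVec_le [NeZero m1] [NeZero m2] [NeZero m3] (hK1 : ∀ j k, 0 < K1 j k)
    (hK2 : ∀ k l, 0 < K2 k l) {v₁ w₁ : Fin m1 → ℝ} {v₃ w₃ : Fin m3 → ℝ}
    (hv₁ : ∀ j, 0 < v₁ j) (hw₁ : ∀ j, 0 < w₁ j) (hv₃ : ∀ l, 0 < v₃ l) (hw₃ : ∀ l, 0 < w₃ l) :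
    dH (fun k => √((K1ᵀ *ᵥ v₁) k / (K2 *ᵥ v₃) k)) (fun k => √((K1ᵀ *ᵥ w₁) k / (K2 *ᵥ w₃) k))
      ≤ max (birkhoffLambda K1) (birkhoffLambda K2) * max (dH v₁ w₁) (dH v₃ w₃) := by
  have hK1t : ∀ k j, 0 < K1ᵀ k j := fun k j => hK1 j k
  have hP := mulVec_pos_of_pos hK1t hv₁
  have hP' := mulVec_pos_of_pos hK1t hw₁
  have hQ := mulVec_pos_of_pos hK2 hv₃
  have hQ' := mulVec_pos_of_pos hK2 hw₃
  have h₁ : dH (K1ᵀ *ᵥ v₁) (K1ᵀ *ᵥ w₁) ≤ birkhoffLambda K1 * dH v₁ w₁ :=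
    birkhoffLambda_transpose K1 ▸ dH_mulVec_le hK1t hv₁ hw₁
  calc _ ≤ _ / 2 := dH_sqrt_le (fun k => div_pos (hP k) (hQ k)) (fun k => div_pos (hP' k) (hQ' k))
    _ ≤ _ / 2 := div_le_div_of_nonneg_right (dH_div_le hP hQ hP' hQ') zero_le_two
    _ ≤ _ / 2 := div_le_div_of_nonneg_right (add_le_add h₁ (dH_mulVec_le hK2 hv₃ hw₃)) zero_le_two
    _ ≤ _ := mul_add_mul_div_two_le_max_mul_max (birkhoffLambda_nonneg hK1)
      (dH_nonneg hv₁ hw₁) (dH_nonneg hv₃ hw₃)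

lemma sinkhorn_iterate_pos [NeZero m1] [NeZero m2] [NeZero m3] {a : Fin m1 → ℝ} {b : Fin m3 → ℝ}
    (ha : ∀ j, 0 < a j) (hb : ∀ l, 0 < b l) (hK1 : ∀ j k, 0 < K1 j k) (hK2 : ∀ k l, 0 < K2 k l)
    {u1 : ℕ → Fin m1 → ℝ} {u2 : ℕ → Fin m2 → ℝ} {u3 : ℕ → Fin m3 → ℝ}
    (h01 : ∀ j, 0 < u1 0 j) (h03 : ∀ l, 0 < u3 0 l)
    (hrec2 : ∀ n, u2 (n+1) = fun k => √((K1ᵀ *ᵥ u1 n) k / (K2 *ᵥ u3 n) k))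
    (hrec1 : ∀ n, u1 (n+1) = fun j => a j / (K1 *ᵥ fun k => (u2 (n+1) k)⁻¹) j)
    (hrec3 : ∀ n, u3 (n+1) = fun l => b l / (K2ᵀ *ᵥ u2 (n+1)) l) (n : ℕ) :
    (∀ j, 0 < u1 n j) ∧ (∀ l, 0 < u3 n l) ∧ ∀ k, 0 < u2 (n + 1) k := by
  have hmid : ∀ n, (∀ j, 0 < u1 n j) → (∀ l, 0 < u3 n l) → ∀ k, 0 < u2 (n + 1) k :=
    fun n h₁ h₃ k => hrec2 n ▸ Real.sqrt_pos.2
      (div_pos (mulVec_pos_of_pos (fun k j => hK1 j k) h₁ k) (mulVec_pos_of_pos hK2 h₃ k))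
  induction n with
  | zero => exact ⟨h01, h03, hmid 0 h01 h03⟩
  | succ n ih =>
    obtain ⟨-, -, h₂⟩ := ih
    have h₁ : ∀ j, 0 < u1 (n + 1) j := hrec1 n ▸ fun j =>
      div_pos (ha j) (mulVec_pos_of_pos hK1 (fun k => inv_pos.2 (h₂ k)) j)
    have h₃ : ∀ l, 0 < u3 (n + 1) l := hrec3 n ▸ fun l =>
      div_pos (hb l) (mulVec_pos_of_pos (fun l k => hK2 k l) h₂ l)
    exact ⟨h₁, h₃, hmid (n + 1) h₁ h₃⟩

end SinkhornUpdates

theorem sinkhorn_one_step_contraction_M2_general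
    {m1 m2 m3 : ℕ} (hm1 : 0 < m1) (hm2 : 0 < m2) (hm3 : 0 < m3)
    (C1 : Matrix (Fin m1) (Fin m2) ℝ) (C2 : Matrix (Fin m2) (Fin m3) ℝ)
    (a : Fin m1 → ℝ) (b : Fin m3 → ℝ)
    (ha : ∀ j, 0 < a j) (hb : ∀ l, 0 < b l)
    (ε : ℝ) (hε : 0 < ε)
    (K1 : Matrix (Fin m1) (Fin m2) ℝ) (K2 : Matrix (Fin m2) (Fin m3) ℝ)
    (hK1 : ∀ j k, K1 j k = Real.exp (-C1 j k / ε))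
    (hK2 : ∀ k l, K2 k l = Real.exp (-C2 k l / ε))
    (u1 : ℕ → Fin m1 → ℝ) (u2 : ℕ → Fin m2 → ℝ) (u3 : ℕ → Fin m3 → ℝ)
    (h01 : ∀ j, 0 < u1 0 j) (h03 : ∀ l, 0 < u3 0 l)
    (hrec2 : ∀ n, u2 (n+1) = fun k => Real.sqrt ((K1ᵀ *ᵥ u1 n) k / (K2 *ᵥ u3 n) k))
    (hrec1 : ∀ n, u1 (n+1) = fun j => a j / (K1 *ᵥ fun k => (u2 (n+1) k)⁻¹) j)
    (hrec3 : ∀ n, u3 (n+1) = fun l => b l / (K2ᵀ *ᵥ u2 (n+1)) l)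
    (uh1 : Fin m1 → ℝ) (uh2 : Fin m2 → ℝ) (uh3 : Fin m3 → ℝ)
    (hpos1 : ∀ j, 0 < uh1 j) (hpos2 : ∀ k, 0 < uh2 k) (hpos3 : ∀ l, 0 < uh3 l)
    (hopt : ∀ (f1 : Fin m1 → ℝ) (f2 : Fin m2 → ℝ) (f3 : Fin m3 → ℝ),
      dual2 a b ε C1 C2 f1 f2 f3 ≤
        dual2 a b ε C1 C2 (fun j => ε * Real.log (uh1 j))
          (fun k => ε * Real.log (uh2 k)) (fun l => ε * Real.log (uh3 l))) :
    ∀ n : ℕ,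
      dH (u1 (n+1)) uh1 ≤ birkhoffLambda K1 * dH (u2 (n+1)) uh2 ∧
      dH (u3 (n+1)) uh3 ≤ birkhoffLambda K2 * dH (u2 (n+1)) uh2 ∧
      dH (u2 (n+1)) uh2 ≤ max (birkhoffLambda K1) (birkhoffLambda K2) *
        max (dH (u1 n) uh1) (dH (u3 n) uh3) := by
  have : NeZero m1 := ⟨hm1.ne'⟩
  have : NeZero m2 := ⟨hm2.ne'⟩
  have : NeZero m3 := ⟨hm3.ne'⟩
  have hK1pos : ∀ j k, 0 < K1 j k := fun j k => hK1 j k ▸ exp_pos _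
  have hK2pos : ∀ k l, 0 < K2 k l := fun k l => hK2 k l ▸ exp_pos _
  obtain ⟨hfix1, hfix3, hfix2⟩ :=
    sinkhorn_fixedPoint_of_isMax_dual2 ha hb hε hK1 hK2 hpos1 hpos2 hpos3 hopt
  intro n
  obtain ⟨hu1, hu3, hu2⟩ :=
    sinkhorn_iterate_pos ha hb hK1pos hK2pos h01 h03 hrec2 hrec1 hrec3 n
  refine ⟨?_, ?_, ?_⟩
  · rw [hrec1, hfix1]
    exact dH_div_mulVec_inv_le hK1pos (fun j => (ha j).ne') hu2 hpos2
  · rw [hrec3, hfix3]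
    exact dH_div_transpose_mulVec_le hK2pos (fun l => (hb l).ne') hu2 hpos2
  · rw [hrec2, hfix2]
    exact dH_sqrt_div_mulVec_le hK1pos hK2pos hu1 hpos1 hu3 hpos3

/-- **One-step contraction of the Sinkhorn iteration for `M = 2`**: each update contracts
the Hilbert distance to the dual-optimal vectors by the Birkhoff coefficients. -/
theorem sinkhorn_one_step_contraction_M2
    {m1 m2 m3 : ℕ} (hm1 : 0 < m1) (hm2 : 0 < m2) (hm3 : 0 < m3)
    (C1 : Matrix (Fin m1) (Fin m2) ℝ) (C2 : Matrix (Fin m2) (Fin m3) ℝ)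
    (hC1 : ∀ j k, 0 ≤ C1 j k) (hC2 : ∀ k l, 0 ≤ C2 k l)
    (a : Fin m1 → ℝ) (b : Fin m3 → ℝ)
    (ha : ∀ j, 0 < a j) (hb : ∀ l, 0 < b l)
    (hasum : ∑ j, a j = 1) (hbsum : ∑ l, b l = 1)
    (ε : ℝ) (hε : 0 < ε)
    (K1 : Matrix (Fin m1) (Fin m2) ℝ) (K2 : Matrix (Fin m2) (Fin m3) ℝ)
    (hK1 : ∀ j k, K1 j k = Real.exp (-C1 j k / ε))
    (hK2 : ∀ k l, K2 k l = Real.exp (-C2 k l / ε))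
    (u1 : ℕ → Fin m1 → ℝ) (u2 : ℕ → Fin m2 → ℝ) (u3 : ℕ → Fin m3 → ℝ)
    (h01 : ∀ j, 0 < u1 0 j) (h02 : ∀ k, 0 < u2 0 k) (h03 : ∀ l, 0 < u3 0 l)
    (hrec2 : ∀ n, u2 (n+1) = fun k => Real.sqrt ((K1ᵀ *ᵥ u1 n) k / (K2 *ᵥ u3 n) k))
    (hrec1 : ∀ n, u1 (n+1) = fun j => a j / (K1 *ᵥ fun k => (u2 (n+1) k)⁻¹) j)
    (hrec3 : ∀ n, u3 (n+1) = fun l => b l / (K2ᵀ *ᵥ u2 (n+1)) l)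
    (uh1 : Fin m1 → ℝ) (uh2 : Fin m2 → ℝ) (uh3 : Fin m3 → ℝ)
    (hpos1 : ∀ j, 0 < uh1 j) (hpos2 : ∀ k, 0 < uh2 k) (hpos3 : ∀ l, 0 < uh3 l)
    (hopt : ∀ (f1 : Fin m1 → ℝ) (f2 : Fin m2 → ℝ) (f3 : Fin m3 → ℝ),
      dual2 a b ε C1 C2 f1 f2 f3 ≤
        dual2 a b ε C1 C2 (fun j => ε * Real.log (uh1 j))
          (fun k => ε * Real.log (uh2 k)) (fun l => ε * Real.log (uh3 l))) :
    ∀ n : ℕ,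
      dH (u1 (n+1)) uh1 ≤ birkhoffLambda K1 * dH (u2 (n+1)) uh2 ∧
      dH (u3 (n+1)) uh3 ≤ birkhoffLambda K2 * dH (u2 (n+1)) uh2 ∧
      dH (u2 (n+1)) uh2 ≤ max (birkhoffLambda K1) (birkhoffLambda K2) *
        max (dH (u1 n) uh1) (dH (u3 n) uh3) :=
  sinkhorn_one_step_contraction_M2_general hm1 hm2 hm3 C1 C2 a b ha hb ε hε K1 K2 hK1 hK2 u1 u2 u3
    h01 h03 hrec2 hrec1 hrec3 uh1 uh2 uh3 hpos1 hpos2 hpos3 hopt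
end
end

section
/- Let (û^(1), û^(2), û^(3)) be a dual-optimal triple. Then for every j ≤ m1 and l ≤ m3: û^(1)_j · (Σ_{k≤m2} K^(1)_{jk} K^(2)_{kl}) · û^(3)_l ≤ 1. -/
/-!
At a maximizer of the dual, the partial derivatives in `f¹_j` and `f³_l` vanish, which gives the
marginal identities `a_j = Σ_k x_k` and `b_l = Σ_k y_k` with `x_k = û¹_j K¹_{jk} / û²_k` and
`y_k = û²_k K²_{kl} û³_l`. Since `û¹_j (Σ_k K¹_{jk} K²_{kl}) û³_l = Σ_k x_k y_k`, it is at most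
`(Σ_k x_k)(Σ_k y_k) = a_j b_l ≤ 1`. The identity for `b` follows from the one for `a` because the
dual is invariant under `(a, b, C¹, C², f¹, f², f³) ↦ (b, a, C²ᵀ, C¹ᵀ, f³, -f², f¹)`.
-/

open Matrix Finset Real

noncomputable section

theorem Finset.sum_mul_le_sum_mul_sum {ι R : Type*} [CommSemiring R] [PartialOrder R]
    [IsOrderedRing R] {s : Finset ι} {f g : ι → R} (hf : ∀ i ∈ s, 0 ≤ f i)
    (hg : ∀ i ∈ s, 0 ≤ g i) : ∑ i ∈ s, f i * g i ≤ (∑ i ∈ s, f i) * ∑ i ∈ s, g i := by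
  rw [sum_mul_sum]
  exact sum_le_sum fun i hi =>
    single_le_sum (f := fun j => f i * g j) (fun j hj => mul_nonneg (hf i hi) (hg j hj)) hi

theorem eq_of_isMaxOn_mul_sub_exp {ε A B : ℝ} (hε : ε ≠ 0)
    (h : IsMaxOn (fun t => t * A - ε * (exp (t / ε) - 1) * B) Set.univ 0) : A = B := by
  have hexp : HasDerivAt (fun t => ε * (exp (t / ε) - 1) * B) B 0 := by
    simpa [hε] using
      ((((hasDerivAt_id (0 : ℝ)).div_const ε).exp.sub_const 1).const_mul ε).mul_const B
  exact sub_eq_zero.mp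
    ((h.isLocalMax Filter.univ_mem).hasDerivAt_eq_zero ((hasDerivAt_mul_const A).sub hexp))

section Marginals

variable {m1 m2 m3 : ℕ} {a : Fin m1 → ℝ} {b : Fin m3 → ℝ} {ε : ℝ}
  {C1 : Matrix (Fin m1) (Fin m2) ℝ} {C2 : Matrix (Fin m2) (Fin m3) ℝ}

theorem dual2_eq_transpose (f1 : Fin m1 → ℝ) (f2 : Fin m2 → ℝ) (f3 : Fin m3 → ℝ) :
    dual2 a b ε C1 C2 f1 f2 f3 = dual2 b a ε C2ᵀ C1ᵀ f3 (-f2) f1 := by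
  simp only [dual2, transpose_apply, Pi.neg_apply, sub_neg_eq_add, add_comm (f3 _),
    neg_add_eq_sub]
  rw [sum_comm (γ := Fin m3), sum_comm (γ := Fin m1)]
  ring

theorem dual2_add_single_sub_dual2 (f1 : Fin m1 → ℝ) (f2 : Fin m2 → ℝ) (f3 : Fin m3 → ℝ)
    (j : Fin m1) (t : ℝ) :
    dual2 a b ε C1 C2 (f1 + Pi.single j t : Fin m1 → ℝ) f2 f3 - dual2 a b ε C1 C2 f1 f2 f3
      = t * a j - ε * (exp (t / ε) - 1) * ∑ k, exp ((f1 j - f2 k - C1 j k) / ε) := by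
  have hlin : ∑ i, (f1 + Pi.single j t : Fin m1 → ℝ) i * a i = ∑ i, f1 i * a i + t * a j := by
    simp [add_mul, sum_add_distrib, Pi.single_apply]
  have hexp : ∑ i, ∑ k, exp (((f1 + Pi.single j t : Fin m1 → ℝ) i - f2 k - C1 i k) / ε)
      = ∑ i, ∑ k, exp ((f1 i - f2 k - C1 i k) / ε)
        + (exp (t / ε) - 1) * ∑ k, exp ((f1 j - f2 k - C1 j k) / ε) := by
    rw [← sub_eq_iff_eq_add', ← sum_sub_distrib, Fintype.sum_eq_single j]
    · simp only [Pi.add_apply, Pi.single_eq_same, ← sum_sub_distrib, mul_sum, sub_mul, one_mul,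
        ← exp_add]
      exact sum_congr rfl fun k _ => by ring_nf
    · intro i hi
      simp [Pi.single_eq_of_ne hi]
  simp only [dual2, hlin, hexp]
  ring

theorem dual2_left_marginal_of_maximizer (hε : ε ≠ 0) {g1 : Fin m1 → ℝ} {g2 : Fin m2 → ℝ}
    {g3 : Fin m3 → ℝ} (hmax : ∀ f1, dual2 a b ε C1 C2 f1 g2 g3 ≤ dual2 a b ε C1 C2 g1 g2 g3)
    (j : Fin m1) : ∑ k, exp ((g1 j - g2 k - C1 j k) / ε) = a j := by
  refine (eq_of_isMaxOn_mul_sub_exp hε (isMaxOn_univ_iff.mpr fun t => ?_)).symm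
  simp only [zero_mul, zero_div, exp_zero, sub_self, mul_zero]
  rw [← dual2_add_single_sub_dual2 (a := a) (b := b) (ε := ε) (C2 := C2) g1 g2 g3 j t]
  exact sub_nonpos.mpr (hmax _)

theorem dual2_right_marginal_of_maximizer (hε : ε ≠ 0) {g1 : Fin m1 → ℝ} {g2 : Fin m2 → ℝ}
    {g3 : Fin m3 → ℝ} (hmax : ∀ f3, dual2 a b ε C1 C2 g1 g2 f3 ≤ dual2 a b ε C1 C2 g1 g2 g3)
    (l : Fin m3) : ∑ k, exp ((g2 k + g3 l - C2 k l) / ε) = b l := by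
  have := dual2_left_marginal_of_maximizer hε (C1 := C2ᵀ) (C2 := C1ᵀ) (g2 := -g2) (g3 := g1)
    (fun f3 => by rw [← dual2_eq_transpose, ← dual2_eq_transpose]; exact hmax f3) l
  refine (sum_congr rfl fun k _ => ?_).trans this
  rw [Pi.neg_apply, transpose_apply, sub_neg_eq_add, add_comm (g3 l)]

end Marginals

theorem exp_sub_div_mul_exp_add_div {ε : ℝ} (hε : ε ≠ 0) {u w : ℝ} (hu : 0 < u) (hw : 0 < w)
    (y c d : ℝ) :
    exp ((ε * log u - y - c) / ε) * exp ((y + ε * log w - d) / ε)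
      = u * (exp (-c / ε) * exp (-d / ε)) * w := by
  rw [← exp_add, show (ε * log u - y - c) / ε + (y + ε * log w - d) / ε
      = log u + (-c / ε + -d / ε) + log w by field_simp; ring,
    exp_add, exp_add, exp_add, exp_log hu, exp_log hw]

theorem dual_optimal_product_bound_general
    {m1 m2 m3 : ℕ}
    (C1 : Matrix (Fin m1) (Fin m2) ℝ) (C2 : Matrix (Fin m2) (Fin m3) ℝ)
    (a : Fin m1 → ℝ) (b : Fin m3 → ℝ)
    (ha : ∀ j, 0 < a j) (hb : ∀ l, 0 < b l)
    (hasum : ∑ j, a j = 1) (hbsum : ∑ l, b l = 1)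
    (ε : ℝ) (hε : 0 < ε)
    (K1 : Matrix (Fin m1) (Fin m2) ℝ) (K2 : Matrix (Fin m2) (Fin m3) ℝ)
    (hK1 : ∀ j k, K1 j k = Real.exp (-C1 j k / ε))
    (hK2 : ∀ k l, K2 k l = Real.exp (-C2 k l / ε))
    (uh1 : Fin m1 → ℝ) (uh2 : Fin m2 → ℝ) (uh3 : Fin m3 → ℝ)
    (hpos1 : ∀ j, 0 < uh1 j) (hpos3 : ∀ l, 0 < uh3 l)
    (hopt : ∀ (f1 : Fin m1 → ℝ) (f2 : Fin m2 → ℝ) (f3 : Fin m3 → ℝ),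
      dual2 a b ε C1 C2 f1 f2 f3 ≤
        dual2 a b ε C1 C2 (fun j => ε * Real.log (uh1 j))
          (fun k => ε * Real.log (uh2 k)) (fun l => ε * Real.log (uh3 l))) :
    ∀ (j : Fin m1) (l : Fin m3), uh1 j * (∑ k, K1 j k * K2 k l) * uh3 l ≤ 1 := by
  intro j l
  have ha_le : a j ≤ 1 := hasum ▸ single_le_sum (fun i _ => (ha i).le) (mem_univ j)
  have hb_le : b l ≤ 1 := hbsum ▸ single_le_sum (fun i _ => (hb i).le) (mem_univ l)
  rw [← dual2_left_marginal_of_maximizer hε.ne' (fun f1 => hopt f1 _ _) j] at ha_le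
  rw [← dual2_right_marginal_of_maximizer hε.ne' (fun f3 => hopt _ _ f3) l] at hb_le
  calc uh1 j * (∑ k, K1 j k * K2 k l) * uh3 l
      = ∑ k, exp ((ε * log (uh1 j) - ε * log (uh2 k) - C1 j k) / ε)
          * exp ((ε * log (uh2 k) + ε * log (uh3 l) - C2 k l) / ε) := by
        simp only [exp_sub_div_mul_exp_add_div hε.ne' (hpos1 j) (hpos3 l), hK1, hK2, mul_sum,
          sum_mul]
    _ ≤ _ := sum_mul_le_sum_mul_sum (fun _ _ => (exp_pos _).le) (fun _ _ => (exp_pos _).le)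
    _ ≤ 1 := mul_le_one₀ ha_le (sum_nonneg fun _ _ => (exp_pos _).le) hb_le

/-- For a dual-optimal triple `(û¹,û²,û³)`, one has
`û¹_j · (Σ_k K¹_{jk}K²_{kl}) · û³_l ≤ 1` for all `j, l`. -/
theorem dual_optimal_product_bound
    {m1 m2 m3 : ℕ} (hm1 : 0 < m1) (hm2 : 0 < m2) (hm3 : 0 < m3)
    (C1 : Matrix (Fin m1) (Fin m2) ℝ) (C2 : Matrix (Fin m2) (Fin m3) ℝ)
    (hC1 : ∀ j k, 0 ≤ C1 j k) (hC2 : ∀ k l, 0 ≤ C2 k l)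
    (a : Fin m1 → ℝ) (b : Fin m3 → ℝ)
    (ha : ∀ j, 0 < a j) (hb : ∀ l, 0 < b l)
    (hasum : ∑ j, a j = 1) (hbsum : ∑ l, b l = 1)
    (ε : ℝ) (hε : 0 < ε)
    (K1 : Matrix (Fin m1) (Fin m2) ℝ) (K2 : Matrix (Fin m2) (Fin m3) ℝ)
    (hK1 : ∀ j k, K1 j k = Real.exp (-C1 j k / ε))
    (hK2 : ∀ k l, K2 k l = Real.exp (-C2 k l / ε))
    (uh1 : Fin m1 → ℝ) (uh2 : Fin m2 → ℝ) (uh3 : Fin m3 → ℝ)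
    (hpos1 : ∀ j, 0 < uh1 j) (hpos2 : ∀ k, 0 < uh2 k) (hpos3 : ∀ l, 0 < uh3 l)
    (hopt : ∀ (f1 : Fin m1 → ℝ) (f2 : Fin m2 → ℝ) (f3 : Fin m3 → ℝ),
      dual2 a b ε C1 C2 f1 f2 f3 ≤
        dual2 a b ε C1 C2 (fun j => ε * Real.log (uh1 j))
          (fun k => ε * Real.log (uh2 k)) (fun l => ε * Real.log (uh3 l))) :
    ∀ (j : Fin m1) (l : Fin m3), uh1 j * (∑ k, K1 j k * K2 k l) * uh3 l ≤ 1 :=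
  dual_optimal_product_bound_general C1 C2 a b ha hb hasum hbsum ε hε K1 K2 hK1 hK2 uh1 uh2 uh3
    hpos1 hpos3 hopt
end
end
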